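/- arXiv:2011.14820 — 2 statements merged into one kernel-verified Lean document; each statement's English description precedes it below -/
import Mathlib

section
/- There exists a continuous surjective map from the closed unit interval [0,1] onto the closed unit square [0,1] × [0,1]. -/
/-!
By the Hausdorff–Alexandroff theorem the square is a continuous image of the Cantor space
`ℕ → Bool`, which is homeomorphic to the Cantor set `C ⊆ [0,1]`. The square has the Tietze
extension property, so this map extends from the closed set `C` to all of `[0,1]`, and the
extension is still onto.
-/

open Topology

universe u v w

theorem exists_continuous_surjective_of_isClosedEmbedding {X : Type u} {Y : Type v} {Z : Type w}
    [TopologicalSpace X] [TopologicalSpace Y] [NormalSpace Y] [TopologicalSpace Z]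
    [TietzeExtension.{v} Z] {e : X → Y} (he : IsClosedEmbedding e) {f : X → Z}
    (hf : Continuous f) (hf' : Function.Surjective f) :
    ∃ g : Y → Z, Continuous g ∧ Function.Surjective g := by
  obtain ⟨g, hg⟩ := ContinuousMap.exists_extension' he ⟨f, hf⟩
  exact ⟨g, g.continuous, .of_comp (g := e) (by rwa [hg])⟩

theorem exists_continuous_surjective_unitInterval (X : Type u) [Nonempty X] [MetricSpace X]
    [CompactSpace X] [TietzeExtension.{0} X] :
    ∃ f : unitInterval → X, Continuous f ∧ Function.Surjective f := by
  obtain ⟨f, hf, hf'⟩ := exists_nat_bool_continuous_surjective_of_compact X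
  have he : IsClosedEmbedding (Set.inclusion cantorSet_subset_unitInterval) :=
    .inclusion _ (isClosed_cantorSet.preimage continuous_subtype_val)
  exact exists_continuous_surjective_of_isClosedEmbedding he
    (hf.comp cantorSetHomeomorphNatToBool.continuous)
    (hf'.comp cantorSetHomeomorphNatToBool.surjective)

/-- There exists a continuous surjective map from the closed unit interval `[0,1]`
onto the closed unit square `[0,1] × [0,1]` (a space-filling curve). -/
theorem space_filling_curve_exists :
    ∃ f : Set.Icc (0 : ℝ) 1 → Set.Icc (0 : ℝ) 1 × Set.Icc (0 : ℝ) 1,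
      Continuous f ∧ Function.Surjective f :=
  exists_continuous_surjective_unitInterval (unitInterval × unitInterval)
end

section
/- If f : [0,1] → [0,1]² is a surjection that is Hölder continuous with exponent α, then α ≤ 1/2. -/
/-!
A Hölder map with exponent `α` raises Hausdorff dimension by a factor of at most `1 / α`, so the
image of `[0,1]` has dimension at most `1 / α`. The image contains the unit square, which has
nonempty interior in the plane and hence dimension `2`. Thus `2 ≤ 1 / α`.
-/

open Set
open scoped NNReal ENNReal

theorem HolderOnWith.of_dist_le {X Y : Type*} [PseudoMetricSpace X] [PseudoMetricSpace Y]
    {f : X → Y} {s : Set X} {C r : ℝ} (hC : 0 ≤ C) (hr : 0 ≤ r)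
    (h : ∀ x ∈ s, ∀ y ∈ s, dist (f x) (f y) ≤ C * dist x y ^ r) :
    HolderOnWith C.toNNReal r.toNNReal f s := by
  intro x hx y hy
  rw [edist_dist, edist_dist, Real.coe_toNNReal r hr, ENNReal.ofReal_rpow_of_nonneg dist_nonneg hr]
  exact (ENNReal.ofReal_le_ofReal (h x hx y hy)).trans_eq (ENNReal.ofReal_mul hC)

theorem HolderOnWith.dimH_image_le_finrank_div {E Y : Type*} [NormedAddCommGroup E]
    [NormedSpace ℝ E] [FiniteDimensional ℝ E] [EMetricSpace Y] {C r : ℝ≥0} {f : E → Y}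
    {s : Set E} (h : HolderOnWith C r f s) (hr : 0 < r) :
    dimH (f '' s) ≤ Module.finrank ℝ E / r :=
  (h.dimH_image_le hr).trans <| by
    gcongr
    exact (dimH_mono (subset_univ s)).trans (Real.dimH_univ_eq_finrank E).le

theorem Real.dimH_setOf_forall_mem_Icc {ι : Type*} [Fintype ι] {a b : ℝ} (hab : a < b) :
    dimH {y : EuclideanSpace ℝ ι | ∀ i, y i ∈ Icc a b} = Fintype.card ι := by
  obtain ⟨c, hac, hcb⟩ := exists_between hab
  have hpi : univ.pi (fun _ : ι => Icc a b) ∈ nhds (fun _ : ι => c) :=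
    set_pi_mem_nhds finite_univ fun _ _ => Icc_mem_nhds hac hcb
  have hmem : {y : EuclideanSpace ℝ ι | ∀ i, y i ∈ Icc a b} ∈
      nhds (WithLp.toLp 2 fun _ => c) := by
    simpa [Set.preimage, Set.pi] using
      (EuclideanSpace.equiv ι ℝ).continuous.continuousAt.preimage_mem_nhds
        (x := WithLp.toLp 2 _) hpi
  rw [Real.dimH_of_mem_nhds hmem, finrank_euclideanSpace]

theorem NNReal.mul_le_one_of_coe_le_one_div {a r : ℝ≥0} (h : (a : ℝ≥0∞) ≤ 1 / r) :
    a * r ≤ 1 := by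
  rcases eq_or_ne r 0 with rfl | hr
  · simp
  rw [ENNReal.le_div_iff_mul_le (by simp [hr]) (by simp)] at h
  exact_mod_cast h

/-- If `f : [0,1] → [0,1]²` is surjective onto the unit square and Hölder continuous
with exponent `α > 0`, then `α ≤ 1/2`. -/
theorem holder_exponent_le_half
    (f : ℝ → EuclideanSpace ℝ (Fin 2)) (α C : ℝ) (hα : 0 < α) (hC : 0 ≤ C)
    (hHolder : ∀ s ∈ Set.Icc (0 : ℝ) 1, ∀ t ∈ Set.Icc (0 : ℝ) 1,
      ‖f s - f t‖ ≤ C * |s - t| ^ α)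
    (hsurj : ∀ y : EuclideanSpace ℝ (Fin 2),
      y 0 ∈ Set.Icc (0 : ℝ) 1 → y 1 ∈ Set.Icc (0 : ℝ) 1 →
        ∃ s ∈ Set.Icc (0 : ℝ) 1, f s = y) :
    α ≤ 1 / 2 := by
  have hf : HolderOnWith C.toNNReal α.toNNReal f (Icc 0 1) :=
    .of_dist_le hC hα.le fun s hs t ht => by
      simpa only [dist_eq_norm, Real.norm_eq_abs] using hHolder s hs t ht
  have hsquare : {y : EuclideanSpace ℝ (Fin 2) | ∀ i, y i ∈ Icc 0 1} ⊆ f '' Icc 0 1 :=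
    fun y hy => hsurj y (hy 0) (hy 1)
  have hdim : (2 : ℝ≥0∞) ≤ 1 / α.toNNReal := by
    calc (2 : ℝ≥0∞) = dimH {y : EuclideanSpace ℝ (Fin 2) | ∀ i, y i ∈ Icc 0 1} := by
          rw [Real.dimH_setOf_forall_mem_Icc zero_lt_one, Fintype.card_fin]; rfl
      _ ≤ dimH (f '' Icc 0 1) := dimH_mono hsquare
      _ ≤ Module.finrank ℝ ℝ / α.toNNReal :=
          hf.dimH_image_le_finrank_div (Real.toNNReal_pos.mpr hα)
      _ = 1 / α.toNNReal := by rw [Module.finrank_self, Nat.cast_one]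
  have h2α : 2 * (α.toNNReal : ℝ) ≤ 1 := by
    exact_mod_cast NNReal.mul_le_one_of_coe_le_one_div (a := 2) (by exact_mod_cast hdim)
  rw [Real.coe_toNNReal α hα.le] at h2α
  linarith
end
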